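/- Let q be a prime, x_1,...,x_n distinct in F_q, n = 2k-1, k ≤ d ≤ n, m = d-k+1. Let D ⊆ {1,...,n} with |D| = d. Then the map (s,r) ↦ (first symbol of each share in D) = V_D applied to the first column (s, r_1) of M(s,r), from F_q^m × F_q^{k-1} (ignoring r_2,...,r_m) to F_q^d, is bijective in (s, r_1); in particular s is determined by the first qudit of each of any d shares. -/

import Mathlib

theorem Matrix.mulVec_vandermonde_bijective {K : Type*} [Field K] {n : ℕ} {v : Fin n → K}
    (hv : Function.Injective v) : Function.Bijective (Matrix.vandermonde v).mulVec := by
  have hunit : IsUnit (Matrix.vandermonde v) :=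
    (Matrix.isUnit_iff_isUnit_det _).2 (Matrix.det_vandermonde_ne_zero_iff.2 hv).isUnit
  exact ⟨Matrix.mulVec_injective_iff_isUnit.2 hunit, Matrix.mulVec_surjective_iff_isUnit.2 hunit⟩

theorem Fin.append_comp_cast_bijective {α : Type*} {m n d : ℕ} (h : d = m + n) :
    Function.Bijective fun p : (Fin m → α) × (Fin n → α) =>
      fun j : Fin d => Fin.append p.1 p.2 (Fin.cast h j) :=
  ((Fin.appendEquiv m n).trans ((finCongr h.symm).arrowCongr (Equiv.refl α))).bijective

/-- d-share recovery from first qudits: the map (s,r₁) ↦ V_D·(s,r₁) formed from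
the first symbol of each of d shares is bijective. -/
theorem staircase_first_qudits_bijective
    (q k d m : ℕ) [Fact (Nat.Prime q)] (hk : 1 ≤ k) (hkd : k ≤ d)
    (hm : m = d - k + 1)
    (x : Fin (2 * k - 1) → ZMod q) (hx : Function.Injective x)
    (D : Fin d ↪ Fin (2 * k - 1)) :
    Function.Bijective (fun p : (Fin m → ZMod q) × (Fin (k - 1) → ZMod q) =>
      (Matrix.of fun (i j : Fin d) => x (D i) ^ (j : ℕ)).mulVec
        (fun j => Fin.append p.1 p.2 (Fin.cast (by omega : d = m + (k - 1)) j))) :=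
  (Matrix.mulVec_vandermonde_bijective (hx.comp D.injective)).comp
    (Fin.append_comp_cast_bijective (by omega))
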